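/- Let X ⊆ ℤ^n be c_1-connected, equipped with the Euclidean metric d. Let S,T: X → X with T c_1-continuous (i.e., whenever x and y are c_1-adjacent, T(x) = T(y) or T(x) and T(y) are c_1-adjacent). Suppose there exists β: [0,∞) → [0,1) such that d(S(x),S(y)) ≤ β(d(T(x),T(y)))·d(T(x),T(y)) for all x,y ∈ X. Then S is a constant function. -/

import Mathlib

/-!
Adjacent points of `X` are sent by `T` to points at distance `0` or `1`, so the contraction
condition puts their images under `S` at distance `< 1`. Distinct points of `ℤ^n` are at distance
at least `1`, so `S` agrees on adjacent points, hence on all of the c₁-connected set `X`.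
-/

open Filter Topology

/-- Points of ℤ^n are c₁-adjacent if they differ by exactly 1 in exactly one
coordinate and agree in all other coordinates. -/
def C1Adj {n : ℕ} (x y : Fin n → ℤ) : Prop :=
  ∃ i, (x i - y i).natAbs = 1 ∧ ∀ j, j ≠ i → x j = y j

/-- A subset of ℤ^n is c₁-connected if any two of its points are joined by a
path in the set whose consecutive points are c₁-adjacent. -/
def C1Connected {n : ℕ} (X : Set (Fin n → ℤ)) : Prop :=
  ∀ x ∈ X, ∀ y ∈ X,
    Relation.ReflTransGen (fun a b => a ∈ X ∧ b ∈ X ∧ C1Adj a b) x y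

/-- The Euclidean metric on ℤ^n. -/
noncomputable def euclDist {n : ℕ} (x y : Fin n → ℤ) : ℝ :=
  Real.sqrt (∑ i, ((x i : ℝ) - (y i : ℝ)) ^ 2)

section

variable {n : ℕ}

@[simp]
lemma euclDist_self (x : Fin n → ℤ) : euclDist x x = 0 := by
  simp [euclDist]

lemma one_le_euclDist {x y : Fin n → ℤ} (h : x ≠ y) : 1 ≤ euclDist x y := by
  obtain ⟨i, hi⟩ := Function.ne_iff.mp h
  have hsq : (1 : ℤ) ≤ (x i - y i) ^ 2 := by
    have : x i - y i ≠ 0 := sub_ne_zero.mpr hi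
    have : 0 < (x i - y i) ^ 2 := by positivity
    omega
  have hsq' : (1 : ℝ) ≤ ((x i : ℝ) - y i) ^ 2 := by exact_mod_cast hsq
  refine Real.one_le_sqrt.mpr (hsq'.trans ?_)
  exact Finset.single_le_sum (f := fun j => ((x j : ℝ) - y j) ^ 2)
    (fun j _ => sq_nonneg _) (Finset.mem_univ i)

lemma eq_of_euclDist_lt_one {x y : Fin n → ℤ} (h : euclDist x y < 1) : x = y := by
  by_contra hne
  exact (one_le_euclDist hne).not_gt h

lemma C1Adj.euclDist_eq_one {x y : Fin n → ℤ} (h : C1Adj x y) : euclDist x y = 1 := by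
  obtain ⟨i, hi, hj⟩ := h
  have hsq : ((x i : ℝ) - y i) ^ 2 = 1 := by
    rcases Int.natAbs_eq_iff.mp hi with h | h <;>
    · rw [← Int.cast_sub, h]
      norm_num
  rw [euclDist, Finset.sum_eq_single i (fun j _ hji => by simp [hj j hji])
    (fun hi => absurd (Finset.mem_univ i) hi), hsq, Real.sqrt_one]

lemma C1Connected.eq_of_forall_c1Adj {α : Type*} {X : Set (Fin n → ℤ)} (hX : C1Connected X)
    {f : (Fin n → ℤ) → α} (hf : ∀ a ∈ X, ∀ b ∈ X, C1Adj a b → f a = f b) :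
    ∀ x ∈ X, ∀ y ∈ X, f x = f y := by
  intro x hx y hy
  have hpath := hX x hx y hy
  clear hy
  induction hpath with
  | refl => rfl
  | tail _ hbc ih => exact ih.trans (hf _ hbc.1 _ hbc.2.1 hbc.2.2)

lemma eq_of_euclDist_le_mul_of_c1Adj {β : ℝ → ℝ} (hβ : β 1 < 1) {u v x y : Fin n → ℤ}
    (hxy : x = y ∨ C1Adj x y) (h : euclDist u v ≤ β (euclDist x y) * euclDist x y) :
    u = v := by
  refine eq_of_euclDist_lt_one (h.trans_lt ?_)
  rcases hxy with rfl | hxy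
  · simp
  · simpa [hxy.euclDist_eq_one] using hβ

end

theorem geraghty_pair_S_constant_general
    {n : ℕ} (X : Set (Fin n → ℤ)) (hconn : C1Connected X)
    (S T : (Fin n → ℤ) → (Fin n → ℤ))
    (hTc : ∀ x ∈ X, ∀ y ∈ X, C1Adj x y → T x = T y ∨ C1Adj (T x) (T y))
    (β : ℝ → ℝ) (hβ : ∀ t, 0 ≤ t → 0 ≤ β t ∧ β t < 1)
    (hcontr : ∀ x ∈ X, ∀ y ∈ X,
      euclDist (S x) (S y) ≤ β (euclDist (T x) (T y)) * euclDist (T x) (T y)) :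
    ∀ x ∈ X, ∀ y ∈ X, S x = S y :=
  hconn.eq_of_forall_c1Adj fun a ha b hb hab =>
    eq_of_euclDist_le_mul_of_c1Adj (hβ 1 zero_le_one).2 (hTc a ha b hb hab) (hcontr a ha b hb)

/-- If (T,S) is a pair of Geraghty contraction maps on a
c₁-connected subset of ℤ^n with the Euclidean metric and T is c₁-continuous,
then S is constant. -/
theorem geraghty_pair_S_constant
    {n : ℕ} (X : Set (Fin n → ℤ)) (hconn : C1Connected X)
    (S T : (Fin n → ℤ) → (Fin n → ℤ))
    (hS : ∀ x ∈ X, S x ∈ X) (hT : ∀ x ∈ X, T x ∈ X)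
    (hTc : ∀ x ∈ X, ∀ y ∈ X, C1Adj x y → T x = T y ∨ C1Adj (T x) (T y))
    (β : ℝ → ℝ) (hβ : ∀ t, 0 ≤ t → 0 ≤ β t ∧ β t < 1)
    (hcontr : ∀ x ∈ X, ∀ y ∈ X,
      euclDist (S x) (S y) ≤ β (euclDist (T x) (T y)) * euclDist (T x) (T y)) :
    ∀ x ∈ X, ∀ y ∈ X, S x = S y :=
  geraghty_pair_S_constant_general X hconn S T hTc β hβ hcontr
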